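/- arXiv:1604.07475 — 8 statements merged into one kernel-verified Lean document; each statement's English description precedes it below -/
import Mathlib

section
/- Let (G,p) be a framework in ℝ^d whose points p do not all lie in an affine hyperplane, and let p' be an infinitesimal flex of (G,p). Then (1) for every edge {i,j} of G, ‖(p i + p' i) − (p j + p' j)‖ = ‖(p i − p' i) − (p j − p' j)‖; and (2) the configuration p + p' is congruent to p − p' (there is an isometry of ℝ^d taking one to the other) if and only if p' is a trivial infinitesimal flex. -/
open scoped InnerProductSpace

/-- A configuration of `n` points in `ℝ^d`. -/
abbrev Config (n d : ℕ) := Fin n → EuclideanSpace ℝ (Fin d)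

/-- Two configurations are congruent if some isometry of `ℝ^d` takes one to the other. -/
def ConfigCongruent {n d : ℕ} (q p : Config n d) : Prop :=
  ∃ T : EuclideanSpace ℝ (Fin d) ≃ᵢ EuclideanSpace ℝ (Fin d), ∀ i, T (q i) = p i

/-- An infinitesimal flex of the framework `(G,p)`. -/
def IsFlex {n d : ℕ} (G : SimpleGraph (Fin n)) (p p' : Config n d) : Prop :=
  ∀ i j, G.Adj i j → ⟪p i - p j, p' i - p' j⟫_ℝ = 0

/-- A trivial infinitesimal flex: `p' i = S (p i) + t` with `S` skew-symmetric. -/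
def IsTrivialFlex {n d : ℕ} (p p' : Config n d) : Prop :=
  ∃ S : EuclideanSpace ℝ (Fin d) →ₗ[ℝ] EuclideanSpace ℝ (Fin d),
    (∀ x y, ⟪S x, y⟫_ℝ = -⟪x, S y⟫_ℝ) ∧ ∃ t, ∀ i, p' i = S (p i) + t

/-- `(G,p)` is infinitesimally rigid in `ℝ^d` if every infinitesimal flex is trivial. -/
def InfinitesimallyRigid {n d : ℕ} (G : SimpleGraph (Fin n)) (p : Config n d) : Prop :=
  ∀ p', IsFlex G p p' → IsTrivialFlex p p'

/-!
Part (1) is the parallelogram law for the orthogonal vectors `p i - p j` and `p' i - p' j`.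
For (2), use the Cayley transform `C(A) = (1 - A)(1 + A)⁻¹`, which turns skew-symmetric maps into
linear isometries and, conversely, linear isometries without eigenvalue `-1` into skew-symmetric
maps. If `p' = S p + t` is trivial, `x ↦ C(S)(x - t) - t` carries `p + p'` to `p - p'`.
Conversely, an isometry `x ↦ A x + c` carrying `p + p'` to `p - p'` gives
`(1 + A) p' = (1 - A) p - c`. If `A v = -v` with `v ≠ 0`, pairing this with `v` shows that
`⟪v, p i⟫ = ⟪v, c⟫ / 2` for every `i`, which the hypothesis on `p` forbids; hence `1 + A` is
invertible and `p' = C(A) p + t`.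
-/

section Cayley

variable {K V : Type*} [DivisionRing K] [AddCommGroup V] [Module K V] [FiniteDimensional K V]

noncomputable def cayley (A : Module.End K V) (hA : Function.Injective ⇑(1 + A)) :
    Module.End K V :=
  (1 - A) * (LinearEquiv.ofInjectiveEndo (1 + A) hA).symm

variable {A : Module.End K V}

lemma cayley_apply_add_apply (hA : Function.Injective ⇑(1 + A)) (u : V) :
    cayley A hA (u + A u) = u - A u := by
  have hu : (LinearEquiv.ofInjectiveEndo (1 + A) hA).symm (u + A u) = u :=
    (LinearEquiv.ofInjectiveEndo (1 + A) hA).symm_apply_apply u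
  simp [cayley, hu]

lemma exists_add_apply_eq_of_injective_one_add (hA : Function.Injective ⇑(1 + A)) (x : V) :
    ∃ u, u + A u = x :=
  LinearMap.injective_iff_surjective.mp hA x

lemma cayley_add_apply_cayley (hA : Function.Injective ⇑(1 + A)) (x : V) :
    cayley A hA x + A (cayley A hA x) = x - A x := by
  obtain ⟨u, rfl⟩ := exists_add_apply_eq_of_injective_one_add hA x
  rw [cayley_apply_add_apply, map_sub, map_add]
  abel

end Cayley

lemma IsometryEquiv.add_toRealLinearIsometryEquiv_apply_eq {E : Type*} [NormedAddCommGroup E]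
    [NormedSpace ℝ E] (T : E ≃ᵢ E) {x y : E} (h : T (x + y) = x - y) :
    y + T.toRealLinearIsometryEquiv y = x - T.toRealLinearIsometryEquiv x - T 0 := by
  have hxy := T.toRealLinearIsometryEquiv_apply (x + y)
  rw [map_add, h] at hxy
  linear_combination (norm := module) hxy

section InnerProductSpace

variable {E : Type*} [NormedAddCommGroup E] [InnerProductSpace ℝ E]

lemma inner_apply_self_eq_zero_of_skew {S : Module.End ℝ E}
    (hS : ∀ x y, ⟪S x, y⟫_ℝ = -⟪x, S y⟫_ℝ) (x : E) : ⟪S x, x⟫_ℝ = 0 := by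
  have hx := hS x x
  rw [real_inner_comm (S x) x] at hx
  linarith

lemma injective_one_add_of_skew {S : Module.End ℝ E}
    (hS : ∀ x y, ⟪S x, y⟫_ℝ = -⟪x, S y⟫_ℝ) : Function.Injective ⇑(1 + S) := by
  refine (injective_iff_map_eq_zero _).2 fun x hx => (inner_self_eq_zero (𝕜 := ℝ)).1 ?_
  have hx' : ⟪x + S x, x⟫_ℝ = 0 := by rw [show x + S x = 0 from hx, inner_zero_left]
  rwa [inner_add_left, inner_apply_self_eq_zero_of_skew hS, add_zero] at hx'

lemma norm_cayley_apply_of_skew [FiniteDimensional ℝ E] {S : Module.End ℝ E}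
    (hS : ∀ x y, ⟪S x, y⟫_ℝ = -⟪x, S y⟫_ℝ) (x : E) :
    ‖cayley S (injective_one_add_of_skew hS) x‖ = ‖x‖ := by
  obtain ⟨u, rfl⟩ := exists_add_apply_eq_of_injective_one_add (injective_one_add_of_skew hS) x
  rw [cayley_apply_add_apply]
  exact norm_sub_eq_norm_add (inner_apply_self_eq_zero_of_skew hS u)

lemma cayley_skew_of_linearIsometry [FiniteDimensional ℝ E] (A : E →ₗᵢ[ℝ] E)
    (hA : Function.Injective ⇑(1 + A.toLinearMap)) (x y : E) :
    ⟪cayley _ hA x, y⟫_ℝ = -⟪x, cayley _ hA y⟫_ℝ := by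
  obtain ⟨u, rfl⟩ := exists_add_apply_eq_of_injective_one_add hA x
  obtain ⟨w, rfl⟩ := exists_add_apply_eq_of_injective_one_add hA y
  rw [cayley_apply_add_apply, cayley_apply_add_apply]
  simp only [LinearIsometry.coe_toLinearMap, inner_add_left, inner_add_right, inner_sub_left,
    inner_sub_right, A.inner_map_map]
  ring

lemma inner_apply_eq_neg_inner_of_apply_eq_neg (A : E →ₗᵢ[ℝ] E) {v : E} (hv : A v = -v)
    (x : E) : ⟪v, A x⟫_ℝ = -⟪v, x⟫_ℝ := by
  rw [← A.inner_map_map v x, hv, inner_neg_left, neg_neg]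

lemma injective_one_add_of_forall_add_apply_eq {ι : Type*} (A : E →ₗᵢ[ℝ] E) {p p' : ι → E}
    (c : E) (hspan : ¬ ∃ (f : E →ₗ[ℝ] ℝ) (c : ℝ), f ≠ 0 ∧ ∀ i, f (p i) = c)
    (h : ∀ i, p' i + A (p' i) = p i - A (p i) - c) :
    Function.Injective ⇑(1 + A.toLinearMap) := by
  refine (injective_iff_map_eq_zero _).2 fun v hv => ?_
  by_contra hv0
  have hAv : A v = -v := eq_neg_of_add_eq_zero_right hv
  refine hspan ⟨innerₛₗ ℝ v, ⟪v, c⟫_ℝ / 2, fun hf => hv0 ?_, fun i => ?_⟩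
  · simpa using LinearMap.congr_fun hf v
  · have hi := congrArg (⟪v, ·⟫_ℝ) (h i)
    simp only [inner_add_right, inner_sub_right,
      inner_apply_eq_neg_inner_of_apply_eq_neg A hAv] at hi
    rw [innerₛₗ_apply_apply]
    linarith

end InnerProductSpace

section Framework

variable {n d : ℕ}

lemma IsTrivialFlex.configCongruent {p p' : Config n d} (h : IsTrivialFlex p p') :
    ConfigCongruent (fun i => p i + p' i) (fun i => p i - p' i) := by
  obtain ⟨S, hS, t, ht⟩ := h
  let L : EuclideanSpace ℝ (Fin d) →ₗᵢ[ℝ] EuclideanSpace ℝ (Fin d) :=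
    ⟨cayley S (injective_one_add_of_skew hS), norm_cayley_apply_of_skew hS⟩
  refine ⟨(IsometryEquiv.subRight t).trans
    ((L.toLinearIsometryEquiv rfl).toIsometryEquiv.trans (IsometryEquiv.subRight t)), fun i => ?_⟩
  have hL : L (p i + S (p i)) = p i - S (p i) := cayley_apply_add_apply _ _
  simp only [IsometryEquiv.trans_apply, IsometryEquiv.subRight_apply,
    LinearIsometryEquiv.coe_toIsometryEquiv, LinearIsometry.coe_toLinearIsometryEquiv, ht i,
    add_sub_cancel_right, ← add_assoc, hL]
  abel

lemma IsTrivialFlex.of_configCongruent {p p' : Config n d}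
    (hspan : ¬ ∃ (f : EuclideanSpace ℝ (Fin d) →ₗ[ℝ] ℝ) (c : ℝ), f ≠ 0 ∧ ∀ i, f (p i) = c)
    (h : ConfigCongruent (fun i => p i + p' i) (fun i => p i - p' i)) : IsTrivialFlex p p' := by
  obtain ⟨T, hT⟩ := h
  set A := T.toRealLinearIsometryEquiv.toLinearIsometry
  have hpp' : ∀ i, p' i + A (p' i) = p i - A (p i) - T 0 := fun i =>
    T.add_toRealLinearIsometryEquiv_apply_eq (hT i)
  have hA := injective_one_add_of_forall_add_apply_eq A (T 0) hspan hpp'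
  obtain ⟨t, ht⟩ := exists_add_apply_eq_of_injective_one_add hA (-T 0)
  refine ⟨cayley _ hA, cayley_skew_of_linearIsometry A hA, t, fun i => hA ?_⟩
  have hc := cayley_add_apply_cayley hA (p i)
  simp only [LinearMap.add_apply, Module.End.one_apply, map_add,
    LinearIsometry.coe_toLinearMap] at hc ht ⊢
  rw [hpp' i]
  linear_combination (norm := module) -hc - ht

end Framework

/-- Averaging/de-averaging: if `p'` is an infinitesimal flex of `(G,p)` and the points
of `p` do not all lie in an affine hyperplane, then `p + p'` and `p - p'` have the same
edge lengths, and they are congruent iff `p'` is a trivial flex. -/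
theorem flex_pushpull (n d : ℕ) (G : SimpleGraph (Fin n)) (p p' : Config n d)
    (hspan : ¬ ∃ (f : EuclideanSpace ℝ (Fin d) →ₗ[ℝ] ℝ) (c : ℝ),
      f ≠ 0 ∧ ∀ i, f (p i) = c)
    (hflex : IsFlex G p p') :
    (∀ i j, G.Adj i j →
      ‖(p i + p' i) - (p j + p' j)‖ = ‖(p i - p' i) - (p j - p' j)‖) ∧
    (ConfigCongruent (fun i => p i + p' i) (fun i => p i - p' i) ↔ IsTrivialFlex p p') := by
  refine ⟨fun i j hij => ?_,
    ⟨IsTrivialFlex.of_configCongruent hspan, IsTrivialFlex.configCongruent⟩⟩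
  rw [add_sub_add_comm, sub_sub_sub_comm]
  exact (norm_sub_eq_norm_add ((real_inner_comm _ _).trans (hflex i j hij))).symm
end

section
/- Let G be a graph on Fin n and fix d. The set IR of configurations p : Fin n → ℝ^d such that (G,p) is infinitesimally rigid in ℝ^d is open in the Euclidean topology on configuration space; moreover, if IR is nonempty then IR is dense in configuration space. -/
open scoped InnerProductSpace

/-!
Infinitesimal rigidity of `(G, p)` says that the kernel of the rigidity map
`p' ↦ (⟪p i - p j, p' i - p' j⟫)_{ij ∈ G}` lies in the space of trivial flexes, the image of
`(S, t) ↦ (S (p i) + t)_i`; the reverse inclusion always holds. In coordinates, with `F` the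
rigidity matrix and `P` the matrix of trivial flexes (so `F * P = 0`), this amounts to injectivity
of the stacked matrix `B = [F; Pᵀ]`, i.e. to `det (Bᵀ * B) ≠ 0`. Both `F` and `P` depend affinely on
`p`, so `p ↦ det (Bᵀ * B)` is continuous and a polynomial along every line: its nonvanishing
set is open, and dense as soon as it is nonempty.
-/

open Polynomial Matrix Function Module LinearMap

section PolynomialOnLines

variable {E : Type*} [AddCommGroup E] [Module ℝ E] [TopologicalSpace E]
  [IsTopologicalAddGroup E] [ContinuousSMul ℝ E]

theorem dense_setOf_ne_zero_of_polynomial_on_lines {f : E → ℝ}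
    (hf : ∀ q v : E, ∃ Q : ℝ[X], ∀ t : ℝ, f (q + t • v) = Q.eval t) (h : ∃ p, f p ≠ 0) :
    Dense {p | f p ≠ 0} := by
  obtain ⟨p, hp⟩ := h
  intro q
  obtain ⟨Q, hQ⟩ := hf q (p - q)
  have hQ0 : Q ≠ 0 := by
    rintro rfl
    exact hp (by simpa using hQ 1)
  have hdense : Dense {t : ℝ | Q.IsRoot t}ᶜ :=
    (Polynomial.finite_setOfPred_isRoot hQ0).countable.dense_compl ℝ
  have hline : Continuous fun t : ℝ => q + t • (p - q) := by fun_prop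
  simpa using map_mem_closure hline (hdense 0) fun t (ht : ¬Q.IsRoot t) =>
    (show f (q + t • (p - q)) ≠ 0 by rwa [hQ])

end PolynomialOnLines

theorem Matrix.injective_mulVec_iff_det_transpose_mul_self_ne_zero {m k R : Type*} [Fintype m]
    [Fintype k] [DecidableEq k] [Field R] [LinearOrder R] [IsStrictOrderedRing R]
    (A : Matrix m k R) : Injective A.mulVec ↔ (Aᵀ * A).det ≠ 0 := by
  rw [← isUnit_iff_ne_zero, ← isUnit_iff_isUnit_det, ← mulVec_injective_iff_isUnit]
  simp only [← coe_mulVecLin, ← LinearMap.ker_eq_bot, ker_mulVecLin_transpose_mul_self]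

theorem Matrix.injective_fromRows_mulVec_iff {ι κ μ R : Type*} [Fintype κ] [Fintype μ]
    [Field R] [LinearOrder R] [IsStrictOrderedRing R]
    (F : Matrix ι κ R) (P : Matrix κ μ R) (hFP : F * P = 0) :
    Injective (fromRows F Pᵀ).mulVec ↔ ker F.mulVecLin ≤ range P.mulVecLin := by
  have hker : ker (fromRows F Pᵀ).mulVecLin = ker F.mulVecLin ⊓ ker Pᵀ.mulVecLin := by
    ext v
    simp only [LinearMap.mem_ker, Submodule.mem_inf, mulVecLin_apply, fromRows_mulVec,
      ← Sum.elim_zero_zero, Sum.elim_eq_iff]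
  rw [← coe_mulVecLin, ← LinearMap.ker_eq_bot, hker]
  constructor
  · -- `ker F ⊓ ker Pᵀ = ⊥` bounds `dim ker F` by `card κ - dim ker Pᵀ = rank Pᵀ = rank P`.
    intro hdisj
    have hrange : range P.mulVecLin ≤ ker F.mulVecLin := by
      rw [LinearMap.range_le_ker_iff, ← mulVecLin_mul, hFP, mulVecLin_zero]
    refine (Submodule.eq_of_le_of_finrank_le hrange ?_).ge
    have hsum := Submodule.finrank_sup_add_finrank_inf_eq (ker F.mulVecLin) (ker Pᵀ.mulVecLin)
    have hsup := Submodule.finrank_le (ker F.mulVecLin ⊔ ker Pᵀ.mulVecLin)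
    have hnullity := LinearMap.finrank_range_add_finrank_ker Pᵀ.mulVecLin
    have hrank : Pᵀ.rank = P.rank := rank_transpose P
    rw [hdisj, finrank_bot] at hsum
    simp only [rank, Module.finrank_fintype_fun_eq_card] at hsup hnullity hrank ⊢
    omega
  · intro hle
    rw [eq_bot_iff]
    rintro v ⟨hFv, hPv⟩
    obtain ⟨u, rfl⟩ := hle hFv
    rw [Submodule.mem_bot, ← dotProduct_self_eq_zero]
    simp only [SetLike.mem_coe, LinearMap.mem_ker, mulVecLin_apply] at hPv ⊢
    rw [dotProduct_mulVec, ← mulVec_transpose, hPv, zero_dotProduct]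

theorem LinearMap.ker_toMatrix_le_range_toMatrix_iff {R U V W ι κ μ : Type*} [CommRing R]
    [AddCommGroup U] [Module R U] [AddCommGroup V] [Module R V] [AddCommGroup W] [Module R W]
    [Finite ι] [Fintype κ] [DecidableEq κ] [Fintype μ] [DecidableEq μ]
    (bU : Basis μ R U) (bV : Basis κ R V) (bW : Basis ι R W) (f : V →ₗ[R] W) (g : U →ₗ[R] V) :
    ker (toMatrix bV bW f).mulVecLin ≤ range (toMatrix bU bV g).mulVecLin ↔
      ker f ≤ range g := by
  have hf (x : V) : (toMatrix bV bW f).mulVecLin (bV.equivFun x) = bW.equivFun (f x) := by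
    simp [toMatrix_mulVec_repr]
  have hg (y : U) : (toMatrix bU bV g).mulVecLin (bU.equivFun y) = bV.equivFun (g y) := by
    simp [toMatrix_mulVec_repr]
  constructor
  · intro h x hx
    obtain ⟨u, hu⟩ := h (x := bV.equivFun x) (by rw [mem_ker, hf, mem_ker.1 hx, map_zero])
    refine ⟨bU.equivFun.symm u, bV.equivFun.injective ?_⟩
    rw [← hg, LinearEquiv.apply_symm_apply, hu]
  · intro h v hv
    obtain ⟨y, hy⟩ := h (x := bV.equivFun.symm v)
      (by rw [mem_ker, ← bW.equivFun.map_eq_zero_iff, ← hf, LinearEquiv.apply_symm_apply]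
          exact hv)
    exact ⟨bU.equivFun y, by rw [hg, hy, LinearEquiv.apply_symm_apply]⟩

section AffineMatrixFamily

variable {m k : Type*} [Fintype m] [Fintype k] [DecidableEq k]

variable {E : Type*} [AddCommGroup E] [Module ℝ E]

theorem AffineMap.exists_polynomial_det_transpose_mul_self_line
    (M : E →ᵃ[ℝ] Matrix m k ℝ) (q v : E) :
    ∃ Q : ℝ[X], ∀ t : ℝ, ((M (q + t • v))ᵀ * M (q + t • v)).det = Q.eval t := by
  let A : Matrix m k ℝ[X] := (M q).map C + (X : ℝ[X]) • (M.linear v).map C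
  refine ⟨(Aᵀ * A).det, fun t => ?_⟩
  have hA : A.map (eval t) = M (q + t • v) := by
    rw [add_comm q, ← vadd_eq_add, M.map_vadd, map_smul, vadd_eq_add]
    ext i j
    simp only [map_apply, Matrix.add_apply, Matrix.smul_apply, smul_eq_mul, X_mul_C, eval_add,
      eval_C, eval_mul, eval_X, A]
    ring
  rw [← coe_evalRingHom, RingHom.map_det, RingHom.mapMatrix_apply, Matrix.map_mul,
    transpose_map, coe_evalRingHom, hA]

variable [TopologicalSpace E] [IsTopologicalAddGroup E] [ContinuousSMul ℝ E]

theorem AffineMap.isOpen_setOf_injective_mulVec [T2Space E] [FiniteDimensional ℝ E]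
    (M : E →ᵃ[ℝ] Matrix m k ℝ) : IsOpen {p | Injective (M p).mulVec} := by
  have hM : Continuous M :=
    AffineMap.continuous_linear_iff.1 M.linear.continuous_of_finiteDimensional
  simp only [injective_mulVec_iff_det_transpose_mul_self_ne_zero]
  exact isOpen_ne_fun (hM.matrix_transpose.matrix_mul hM).matrix_det continuous_const

theorem AffineMap.dense_setOf_injective_mulVec (M : E →ᵃ[ℝ] Matrix m k ℝ)
    (h : ∃ p, Injective (M p).mulVec) : Dense {p | Injective (M p).mulVec} := by
  simp only [injective_mulVec_iff_det_transpose_mul_self_ne_zero] at h ⊢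
  exact dense_setOf_ne_zero_of_polynomial_on_lines
    M.exists_polynomial_det_transpose_mul_self_line h

end AffineMatrixFamily

section KerLeRange

variable {E U V W : Type*} [AddCommGroup E] [Module ℝ E]
  [AddCommGroup U] [Module ℝ U] [FiniteDimensional ℝ U]
  [AddCommGroup V] [Module ℝ V] [FiniteDimensional ℝ V]
  [AddCommGroup W] [Module ℝ W] [FiniteDimensional ℝ W]
  (f : E →ᵃ[ℝ] (V →ₗ[ℝ] W)) (g : E →ᵃ[ℝ] (U →ₗ[ℝ] V))

noncomputable def kerRangeMatrix :
    E →ᵃ[ℝ] Matrix (Fin (finrank ℝ W) ⊕ Fin (finrank ℝ U)) (Fin (finrank ℝ V)) ℝ where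
  toFun p := fromRows (toMatrix (finBasis ℝ V) (finBasis ℝ W) (f p))
    (toMatrix (finBasis ℝ U) (finBasis ℝ V) (g p))ᵀ
  linear :=
    { toFun v := fromRows (toMatrix (finBasis ℝ V) (finBasis ℝ W) (f.linear v))
        (toMatrix (finBasis ℝ U) (finBasis ℝ V) (g.linear v))ᵀ
      map_add' v w := by ext (i | i) j <;> simp
      map_smul' c v := by ext (i | i) j <;> simp }
  map_vadd' p v := by
    have hf := f.map_vadd p v
    have hg := g.map_vadd p v
    simp only [vadd_eq_add] at hf hg ⊢
    ext (i | i) j <;> simp [hf, hg]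

theorem setOf_ker_le_range_eq (hfg : ∀ p, range (g p) ≤ ker (f p)) :
    {p | ker (f p) ≤ range (g p)} = {p | Injective (kerRangeMatrix f g p).mulVec} := by
  ext p
  simp only [Set.mem_ofPred_eq, kerRangeMatrix, AffineMap.coe_mk]
  rw [injective_fromRows_mulVec_iff, ker_toMatrix_le_range_toMatrix_iff]
  rw [← toMatrix_comp, range_le_ker_iff.1 (hfg p), map_zero]

variable [TopologicalSpace E] [IsTopologicalAddGroup E] [ContinuousSMul ℝ E]

theorem isOpen_setOf_ker_le_range [T2Space E] [FiniteDimensional ℝ E]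
    (hfg : ∀ p, range (g p) ≤ ker (f p)) : IsOpen {p | ker (f p) ≤ range (g p)} := by
  rw [setOf_ker_le_range_eq f g hfg]
  exact (kerRangeMatrix f g).isOpen_setOf_injective_mulVec

theorem dense_setOf_ker_le_range (hfg : ∀ p, range (g p) ≤ ker (f p))
    (h : {p | ker (f p) ≤ range (g p)}.Nonempty) : Dense {p | ker (f p) ≤ range (g p)} := by
  rw [setOf_ker_le_range_eq f g hfg] at h ⊢
  exact (kerRangeMatrix f g).dense_setOf_injective_mulVec h

end KerLeRange

section Framework

variable {n d : ℕ}

noncomputable def rigidityMap (G : SimpleGraph (Fin n)) :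
    Config n d →ₗ[ℝ] Config n d →ₗ[ℝ] ({e : Fin n × Fin n // G.Adj e.1 e.2} → ℝ) :=
  mk₂ ℝ (fun p p' e => ⟪p e.1.1 - p e.1.2, p' e.1.1 - p' e.1.2⟫_ℝ)
    (fun p q p' => by ext; simp [add_sub_add_comm, inner_add_left])
    (fun c p p' => by ext; simp [← smul_sub, real_inner_smul_left])
    (fun p p' q' => by ext; simp [add_sub_add_comm, inner_add_right])
    (fun c p p' => by ext; simp [← smul_sub, real_inner_smul_right])

noncomputable abbrev SkewMap (d : ℕ) := skewAdjointSubmodule (innerₗ (EuclideanSpace ℝ (Fin d)))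

noncomputable def rotationalFlexMap :
    Config n d →ₗ[ℝ] SkewMap d × EuclideanSpace ℝ (Fin d) →ₗ[ℝ] Config n d :=
  mk₂ ℝ (fun p St i => (St.1 : Module.End ℝ _) (p i))
    (fun p q St => by ext; simp)
    (fun c p St => by ext; simp)
    (fun p St Tu => by ext; simp)
    (fun c p St => by ext; simp)

noncomputable def trivialFlexMap :
    Config n d →ᵃ[ℝ] (SkewMap d × EuclideanSpace ℝ (Fin d) →ₗ[ℝ] Config n d) :=
  rotationalFlexMap.toAffineMap + AffineMap.const ℝ _ (LinearMap.pi fun _ => snd ℝ _ _)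

theorem isFlex_iff_mem_ker_rigidityMap (G : SimpleGraph (Fin n)) (p p' : Config n d) :
    IsFlex G p p' ↔ p' ∈ ker (rigidityMap G p) := by
  simp [IsFlex, funext_iff, rigidityMap]

theorem isTrivialFlex_iff_mem_range_trivialFlexMap (p p' : Config n d) :
    IsTrivialFlex p p' ↔ p' ∈ range (trivialFlexMap p) := by
  simp [IsTrivialFlex, trivialFlexMap, rotationalFlexMap, funext_iff, IsSkewAdjoint,
    LinearMap.IsAdjointPair, eq_comm]

theorem range_trivialFlexMap_le_ker_rigidityMap (G : SimpleGraph (Fin n)) (p : Config n d) :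
    range (trivialFlexMap p) ≤ ker (rigidityMap G p) := by
  intro p' hp'
  obtain ⟨S, hS, t, ht⟩ := (isTrivialFlex_iff_mem_range_trivialFlexMap p p').2 hp'
  rw [← isFlex_iff_mem_ker_rigidityMap]
  intro i j _
  have hdiff : p' i - p' j = S (p i - p j) := by rw [ht, ht, map_sub, add_sub_add_right_eq_sub]
  have hskew := hS (p i - p j) (p i - p j)
  rw [real_inner_comm] at hskew
  rw [hdiff]
  linarith

theorem infinitesimallyRigid_iff_ker_le_range (G : SimpleGraph (Fin n)) (p : Config n d) :
    InfinitesimallyRigid G p ↔ ker (rigidityMap G p) ≤ range (trivialFlexMap p) := by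
  simp only [InfinitesimallyRigid, SetLike.le_def, isFlex_iff_mem_ker_rigidityMap,
    isTrivialFlex_iff_mem_range_trivialFlexMap]

end Framework

/-- The set of infinitesimally rigid configurations is open; if nonempty it is dense. -/
theorem infRigid_set_open_and_dense (n d : ℕ) (G : SimpleGraph (Fin n)) :
    IsOpen {p : Config n d | InfinitesimallyRigid G p} ∧
    ({p : Config n d | InfinitesimallyRigid G p}.Nonempty →
      Dense {p : Config n d | InfinitesimallyRigid G p}) := by
  have hset : {p : Config n d | InfinitesimallyRigid G p} =
      {p | ker ((rigidityMap G).toAffineMap p) ≤ range (trivialFlexMap p)} := by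
    ext p
    exact infinitesimallyRigid_iff_ker_le_range G p
  have htrivial (p : Config n d) := range_trivialFlexMap_le_ker_rigidityMap G p
  rw [hset]
  exact ⟨isOpen_setOf_ker_le_range _ _ htrivial, dense_setOf_ker_le_range _ _ htrivial⟩
end

section
/- Let G be a graph on Fin n and fix d ≥ 1. The set of configurations p : Fin n → ℝ^d whose edge directions lie on a conic at infinity — i.e., for which there exists a nonzero symmetric d×d real matrix Q with (p i − p j)ᵀ Q (p i − p j) = 0 for all edges {i,j} of G — is closed in the Euclidean topology on configuration space. Consequently, if the edge directions of (G,p) do not lie on a conic at infinity, the same holds for all configurations sufficiently close to p. -/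
open scoped InnerProductSpace

/-- The edge directions of `(G,p)` lie on a conic at infinity. -/
def ConicAtInfinity {n d : ℕ} (G : SimpleGraph (Fin n)) (p : Config n d) : Prop :=
  ∃ Q : Matrix (Fin d) (Fin d) ℝ, Q ≠ 0 ∧ Q.IsSymm ∧
    ∀ i j, G.Adj i j → ∑ a, ∑ b, Q a b * (p i - p j) a * (p i - p j) b = 0

/-!
The defining condition is homogeneous in `Q`, so `Q` may be normalised to the unit sphere of the
finite-dimensional space of matrices. The configurations admitting a conic at infinity are then
the projection of a closed subset of `sphere × configuration space`, and projection along a compact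
factor is a closed map.
-/

theorem isClosed_setOf_exists_ne_zero {V X : Type*} [NormedAddCommGroup V] [NormedSpace ℝ V]
    [FiniteDimensional ℝ V] [TopologicalSpace X] {P : V → X → Prop}
    (hP : IsClosed {z : V × X | P z.1 z.2})
    (hP_smul : ∀ (c : ℝ) v x, 0 < c → P v x → P (c • v) x) :
    IsClosed {x | ∃ v ≠ 0, P v x} := by
  have : CompactSpace (Metric.sphere (0 : V) 1) :=
    isCompact_iff_compactSpace.mp (isCompact_sphere 0 1)
  have hC : IsClosed {z : Metric.sphere (0 : V) 1 × X | P z.1 z.2} :=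
    hP.preimage (continuous_subtype_val.prodMap continuous_id)
  convert isClosedMap_snd_of_compactSpace _ hC using 1
  ext x
  constructor
  · rintro ⟨v, hv, hPv⟩
    exact ⟨(⟨‖v‖⁻¹ • v, by simp [norm_smul, hv]⟩, x),
      hP_smul _ _ _ (inv_pos.mpr (norm_pos_iff.mpr hv)) hPv, rfl⟩
  · rintro ⟨⟨v, x⟩, hPv, rfl⟩
    exact ⟨v, ne_zero_of_mem_unit_sphere v, hPv⟩

-- Any norm on matrices would do: only the compactness of its unit sphere is used.
attribute [local instance] Matrix.normedAddCommGroup Matrix.normedSpace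

theorem isClosed_setOf_isSymm_and_edge_quadrics {n d : ℕ} (G : SimpleGraph (Fin n)) :
    IsClosed {z : Matrix (Fin d) (Fin d) ℝ × Config n d | z.1.IsSymm ∧ ∀ i j, G.Adj i j →
      ∑ a, ∑ b, z.1 a b * (z.2 i - z.2 j) a * (z.2 i - z.2 j) b = 0} := by
  simp only [Set.ofPred_and, Set.ofPred_forall]
  exact (isClosed_eq (by fun_prop) (by fun_prop)).inter
    (isClosed_iInter fun i => isClosed_iInter fun j => isClosed_iInter fun _ =>
      isClosed_eq (by fun_prop) continuous_const)

theorem isClosed_setOf_conicAtInfinity {n d : ℕ} (G : SimpleGraph (Fin n)) :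
    IsClosed {p : Config n d | ConicAtInfinity G p} := by
  refine isClosed_setOf_exists_ne_zero (isClosed_setOf_isSymm_and_edge_quadrics G) ?_
  rintro c Q p - ⟨hsym, hedge⟩
  refine ⟨hsym.smul c, fun i j hij => ?_⟩
  simp only [Matrix.smul_apply, smul_eq_mul, mul_assoc, ← Finset.mul_sum]
  simp only [← mul_assoc, hedge i j hij, mul_zero]

theorem conicAtInfinity_closed_general (n d : ℕ) (G : SimpleGraph (Fin n)) :
    IsClosed {p : Config n d | ConicAtInfinity G p} ∧
    ∀ p : Config n d, ¬ ConicAtInfinity G p →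
      ∃ ε > (0 : ℝ), ∀ q : Config n d, (∀ i, ‖q i - p i‖ < ε) →
        ¬ ConicAtInfinity G q := by
  refine ⟨isClosed_setOf_conicAtInfinity G, fun p hp => ?_⟩
  obtain ⟨ε, hε, hball⟩ :=
    Metric.isOpen_iff.mp (isClosed_setOf_conicAtInfinity G).isOpen_compl p hp
  refine ⟨ε, hε, fun q hq => hball ?_⟩
  rw [Metric.mem_ball, dist_pi_lt_iff hε]
  simpa only [dist_eq_norm] using hq

/-- The set of configurations whose edge directions lie on a conic at infinity is
closed; hence not lying on a conic at infinity persists in a neighborhood. -/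
theorem conicAtInfinity_closed (n d : ℕ) (hd : d ≥ 1) (G : SimpleGraph (Fin n)) :
    IsClosed {p : Config n d | ConicAtInfinity G p} ∧
    ∀ p : Config n d, ¬ ConicAtInfinity G p →
      ∃ ε > (0 : ℝ), ∀ q : Config n d, (∀ i, ‖q i - p i‖ < ε) →
        ¬ ConicAtInfinity G q :=
  conicAtInfinity_closed_general n d G
end

section
/- Let Ω₀ be a symmetric n×n real matrix that is positive semidefinite of rank r. Then there exists ε > 0 such that every symmetric n×n real matrix Ω with ‖Ω − Ω₀‖ < ε and rank Ω ≤ r is positive semidefinite of rank exactly r. -/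
attribute [local instance] Matrix.normedAddCommGroup

/-!
Let `V` be the range of `Ω₀`. Since `Ω₀` is positive semidefinite, its quadratic form is
positive definite on `V`, and by compactness of the unit sphere of `V` this persists for every
`Ω` close to `Ω₀`. If moreover `rank Ω ≤ dim V`, then `V` meets `ker Ω` trivially, so by rank–nullity
`V ⊕ ker Ω` is the whole space and `rank Ω = dim V`; for symmetric `Ω` the quadratic form of
`v + k` with `k ∈ ker Ω` equals that of `v`, hence it is nonnegative everywhere.
-/

open Filter Matrix Module Topology

namespace Matrix

variable {ι : Type*} [Fintype ι] {A : Matrix ι ι ℝ} {V : Submodule ℝ (ι → ℝ)}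

theorem disjoint_ker_mulVecLin_of_pos_on (hpos : ∀ x ∈ V, x ≠ 0 → 0 < x ⬝ᵥ A *ᵥ x) :
    Disjoint V (LinearMap.ker A.mulVecLin) := by
  refine Submodule.disjoint_def.2 fun x hxV hxK => by_contra fun hx => ?_
  simpa [show A *ᵥ x = 0 from hxK] using hpos x hxV hx

theorem finrank_le_rank_of_pos_on (hpos : ∀ x ∈ V, x ≠ 0 → 0 < x ⬝ᵥ A *ᵥ x) :
    finrank ℝ V ≤ A.rank := by
  have hdisj := Submodule.finrank_add_finrank_le_of_disjoint (disjoint_ker_mulVecLin_of_pos_on hpos)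
  have hnullity := A.mulVecLin.finrank_range_add_finrank_ker
  rw [rank]
  omega

theorem isCompl_ker_mulVecLin_of_pos_on (hpos : ∀ x ∈ V, x ≠ 0 → 0 < x ⬝ᵥ A *ᵥ x)
    (hrank : A.rank ≤ finrank ℝ V) : IsCompl V (LinearMap.ker A.mulVecLin) := by
  refine (Submodule.isCompl_iff_disjoint _ _ ?_).2 (disjoint_ker_mulVecLin_of_pos_on hpos)
  have hnullity := A.mulVecLin.finrank_range_add_finrank_ker
  rw [rank] at hrank
  omega

theorem IsSymm.dotProduct_mulVec_add_mem_ker (hA : A.IsSymm) (v : ι → ℝ) {k : ι → ℝ}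
    (hk : k ∈ LinearMap.ker A.mulVecLin) : (v + k) ⬝ᵥ A *ᵥ (v + k) = v ⬝ᵥ A *ᵥ v := by
  have hAk : A *ᵥ k = 0 := hk
  rw [mulVec_add, hAk, add_zero, add_dotProduct, dotProduct_mulVec k, ← mulVec_transpose, hA.eq,
    hAk, zero_dotProduct, add_zero]

theorem IsSymm.posSemidef_of_nonneg_on (hA : A.IsSymm)
    (hV : Codisjoint V (LinearMap.ker A.mulVecLin))
    (hnonneg : ∀ x ∈ V, 0 ≤ x ⬝ᵥ A *ᵥ x) :
    A.PosSemidef := by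
  refine .of_dotProduct_mulVec_nonneg (isHermitian_iff_isSymm.2 hA) fun x => ?_
  obtain ⟨v, hv, k, hk, rfl⟩ := Submodule.mem_sup.1 (hV.eq_top ▸ Submodule.mem_top (x := x))
  rw [star_trivial, hA.dotProduct_mulVec_add_mem_ker v hk]
  exact hnonneg v hv

theorem IsSymm.posSemidef_and_rank_eq_of_pos_on (hA : A.IsSymm)
    (hpos : ∀ x ∈ V, x ≠ 0 → 0 < x ⬝ᵥ A *ᵥ x) (hrank : A.rank ≤ finrank ℝ V) :
    A.PosSemidef ∧ A.rank = finrank ℝ V := by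
  refine ⟨hA.posSemidef_of_nonneg_on (isCompl_ker_mulVecLin_of_pos_on hpos hrank).codisjoint
    fun x hx => ?_, hrank.antisymm (finrank_le_rank_of_pos_on hpos)⟩
  rcases eq_or_ne x 0 with rfl | hx0
  · simp
  · exact (hpos x hx hx0).le

theorem PosSemidef.dotProduct_mulVec_pos_of_mem_range (hA : A.PosSemidef) {x : ι → ℝ}
    (hx : x ∈ LinearMap.range A.mulVecLin) (hx0 : x ≠ 0) : 0 < x ⬝ᵥ A *ᵥ x := by
  obtain ⟨y, rfl⟩ := hx
  refine (hA.dotProduct_mulVec_nonneg _).lt_of_ne' fun hq => hx0 ?_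
  have hAx : A *ᵥ (A *ᵥ y) = 0 := (hA.dotProduct_mulVec_zero_iff _).1 hq
  have hsymm : Aᵀ = A := (isHermitian_iff_isSymm.1 hA.isHermitian).eq
  refine dotProduct_self_eq_zero.1 ?_
  change A *ᵥ y ⬝ᵥ A *ᵥ y = 0
  rw [dotProduct_mulVec, ← mulVec_transpose, hsymm, hAx, zero_dotProduct]

theorem dotProduct_mulVec_smul_self (c : ℝ) (x : ι → ℝ) :
    (c • x) ⬝ᵥ A *ᵥ (c • x) = c ^ 2 * (x ⬝ᵥ A *ᵥ x) := by
  rw [mulVec_smul, smul_dotProduct, dotProduct_smul, smul_eq_mul, smul_eq_mul]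
  ring

theorem pos_on_of_pos_on_sphere
    (hpos : ∀ y ∈ (V : Set (ι → ℝ)) ∩ Metric.sphere 0 1, 0 < y ⬝ᵥ A *ᵥ y) :
    ∀ x ∈ V, x ≠ 0 → 0 < x ⬝ᵥ A *ᵥ x := by
  intro x hx hx0
  have hnorm : ‖x‖ ≠ 0 := norm_ne_zero_iff.2 hx0
  have hunit := hpos (‖x‖⁻¹ • x) ⟨V.smul_mem _ hx, by simp [norm_smul, hnorm]⟩
  rw [dotProduct_mulVec_smul_self] at hunit
  exact pos_of_mul_pos_right hunit (by positivity)

theorem eventually_nhds_pos_on (hpos : ∀ x ∈ V, x ≠ 0 → 0 < x ⬝ᵥ A *ᵥ x) :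
    ∀ᶠ B in 𝓝 A, ∀ x ∈ V, x ≠ 0 → 0 < x ⬝ᵥ B *ᵥ x := by
  have hcont : Continuous fun p : Matrix ι ι ℝ × (ι → ℝ) => p.2 ⬝ᵥ p.1 *ᵥ p.2 := by
    fun_prop
  have hS : IsCompact ((V : Set (ι → ℝ)) ∩ Metric.sphere 0 1) :=
    (isCompact_sphere 0 1).inter_left V.closed_of_finiteDimensional
  have hsphere :
      ∀ᶠ B in 𝓝 A, ∀ y ∈ (V : Set (ι → ℝ)) ∩ Metric.sphere 0 1, 0 < y ⬝ᵥ B *ᵥ y := by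
    refine hS.eventually_forall_of_forall_eventually (P := fun B y => 0 < y ⬝ᵥ B *ᵥ y)
      fun y hy => (hcont.tendsto (A, y)).eventually_const_lt (hpos y hy.1 ?_)
    rintro rfl
    simpa using hy.2
  exact hsphere.mono fun _ => pos_on_of_pos_on_sphere

end Matrix

/-- Near a PSD matrix of rank `r`, every symmetric matrix of rank at most `r` is PSD
of rank exactly `r`. -/
theorem psd_rank_stable (n r : ℕ) (Ω₀ : Matrix (Fin n) (Fin n) ℝ)
    (h₀ : Ω₀.PosSemidef) (hr : Ω₀.rank = r) :
    ∃ ε > (0 : ℝ), ∀ Ω : Matrix (Fin n) (Fin n) ℝ, Ω.IsSymm →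
      ‖Ω - Ω₀‖ < ε → Ω.rank ≤ r → Ω.PosSemidef ∧ Ω.rank = r := by
  have hVr : finrank ℝ (LinearMap.range Ω₀.mulVecLin) = r := hr
  obtain ⟨ε, hε, hball⟩ := Metric.eventually_nhds_iff.1 <|
    eventually_nhds_pos_on fun _ hx hx0 => h₀.dotProduct_mulVec_pos_of_mem_range hx hx0
  refine ⟨ε, hε, fun Ω hΩ hclose hrank => ?_⟩
  rw [← hVr] at hrank ⊢
  exact hΩ.posSemidef_and_rank_eq_of_pos_on (hball (by rwa [dist_eq_norm])) hrank
end

section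
/- Let n ≥ d + 2, let G be a graph on Fin n, and let Ω be an equilibrium stress matrix of rank n − d − 1 for two frameworks (G,p) and (G,q) in ℝ^d, where both p and q affinely span ℝ^d. Then there is an invertible affine transformation A of ℝ^d with q i = A (p i) for all i. -/
open scoped InnerProductSpace

/-- A stress matrix for `G`: symmetric, zero at off-diagonal non-edge entries, and
with the all-ones vector in its kernel. -/
def IsStressMatrix {n : ℕ} (G : SimpleGraph (Fin n)) (Ω : Matrix (Fin n) (Fin n) ℝ) : Prop :=
  Ω.IsSymm ∧ (∀ i j, i ≠ j → ¬ G.Adj i j → Ω i j = 0) ∧ Ω.mulVec (fun _ => 1) = 0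

/-- An equilibrium stress matrix for the framework `(G,p)`. -/
def IsEquilibriumStressMatrix {n d : ℕ} (G : SimpleGraph (Fin n)) (p : Config n d)
    (Ω : Matrix (Fin n) (Fin n) ℝ) : Prop :=
  IsStressMatrix G Ω ∧ ∀ i, ∑ j, Ω i j • p j = 0

/-! The functions `j ↦ g (p j)`, for `g` an affine function on `ℝ^d`, lie in the kernel of any
equilibrium stress matrix of `p`; as `p` spans, they form a space of dimension `d + 1`, which the
rank hypothesis forces to be the whole kernel. The coordinates of `q` lie in that kernel too, so
each is an affine function of `p`: `q = f ∘ p` for an affine map `f`, invertible because `q`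
spans. -/

section AffineEval

variable (k : Type*) {ι V P : Type*} [Field k] [AddCommGroup V] [Module k V] [AddTorsor V P]

def affineEval (p : ι → P) : (P →ᵃ[k] k) →ₗ[k] (ι → k) where
  toFun g := g ∘ p
  map_add' _ _ := rfl
  map_smul' _ _ := rfl

variable {k}

@[simp]
theorem affineEval_apply (p : ι → P) (g : P →ᵃ[k] k) (i : ι) : affineEval k p g i = g (p i) :=
  rfl

theorem affineEval_injective {p : ι → P} (hspan : affineSpan k (Set.range p) = ⊤) :
    Function.Injective (affineEval k p) := by
  rw [← LinearMap.ker_eq_bot, LinearMap.ker_eq_bot']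
  intro g hg
  exact AffineMap.ext_on hspan (by rintro _ ⟨i, rfl⟩; exact congrFun hg i)

theorem AffineMap.linear_surjective_of_affineSpan_image_eq_top {W Q : Type*} [AddCommGroup W]
    [Module k W] [AddTorsor W Q] (f : P →ᵃ[k] Q) {s : Set P}
    (hs : affineSpan k (f '' s) = ⊤) : Function.Surjective f.linear := by
  rw [← LinearMap.range_eq_top, eq_top_iff,
    ← AffineSubspace.vectorSpan_eq_top_of_affineSpan_eq_top k W Q hs, ← AffineMap.map_vectorSpan]
  exact LinearMap.map_le_range

theorem AffineMap.sum_smul_map_eq_zero {W : Type*} [AddCommGroup W] [Module k W]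
    (g : V →ᵃ[k] W) {s : Finset ι} {w : ι → k} {p : ι → V} (hw : ∑ i ∈ s, w i = 0)
    (hwp : ∑ i ∈ s, w i • p i = 0) : ∑ i ∈ s, w i • g (p i) = 0 :=
  calc ∑ i ∈ s, w i • g (p i) = g.linear (∑ i ∈ s, w i • p i) + (∑ i ∈ s, w i) • g 0 := by
        conv_lhs => rw [g.decomp]
        simp [smul_add, Finset.sum_add_distrib, Finset.sum_smul]
    _ = 0 := by rw [hw, hwp, map_zero, zero_smul, add_zero]

theorem range_affineEval_le_ker_mulVecLin [Fintype ι] {m : Type*} {Ω : Matrix m ι k}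
    {p : ι → V} (hΩ : Ω.mulVec (fun _ => 1) = 0) (hΩp : ∀ i, ∑ j, Ω i j • p j = 0) :
    LinearMap.range (affineEval k p) ≤ LinearMap.ker Ω.mulVecLin := by
  rintro _ ⟨g, rfl⟩
  ext i
  have hrow : ∑ j, Ω i j = 0 := by simpa [Matrix.mulVec, dotProduct] using congrFun hΩ i
  simpa [Matrix.mulVec, dotProduct] using g.sum_smul_map_eq_zero hrow (hΩp i)

theorem range_affineEval_eq_ker_mulVecLin [Fintype ι] [FiniteDimensional k V] {m : Type*}
    [Fintype m] {Ω : Matrix m ι k} {p : ι → V} (hspan : affineSpan k (Set.range p) = ⊤)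
    (hΩ : Ω.mulVec (fun _ => 1) = 0) (hΩp : ∀ i, ∑ j, Ω i j • p j = 0)
    (hrank : Ω.rank = Fintype.card ι - Module.finrank k V - 1) :
    LinearMap.range (affineEval k p) = LinearMap.ker Ω.mulVecLin := by
  have hdim : Module.finrank k (LinearMap.range (affineEval k p)) = Module.finrank k V + 1 := by
    rw [LinearMap.finrank_range_of_inj (affineEval_injective hspan), AffineMap.finrank_eq]
    simp
  have hcard : Module.finrank k V + 1 ≤ Fintype.card ι :=
    hdim ▸ (Submodule.finrank_le _).trans_eq (Module.finrank_fintype_fun_eq_card k)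
  have hker := Ω.mulVecLin.finrank_range_add_finrank_ker
  rw [Module.finrank_fintype_fun_eq_card] at hker
  refine Submodule.eq_of_le_of_finrank_eq (range_affineEval_le_ker_mulVecLin hΩ hΩp) ?_
  unfold Matrix.rank at hrank
  omega

theorem exists_affineMap_comp_eq_of_range_affineEval_le {W : Type*} [AddCommGroup W]
    [Module k W] [FiniteDimensional k W] {p : ι → P} {q : ι → W}
    (h : LinearMap.range (affineEval k q) ≤ LinearMap.range (affineEval k p)) :
    ∃ f : P →ᵃ[k] W, f ∘ p = q := by
  let b := Module.finBasis k W
  have hcoord c : ∃ g : P →ᵃ[k] k, affineEval k p g = affineEval k q (b.coord c).toAffineMap :=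
    h ⟨_, rfl⟩
  choose g hg using hcoord
  refine ⟨b.equivFun.symm.toLinearMap.toAffineMap.comp (AffineMap.pi g), funext fun i => ?_⟩
  simp only [Function.comp_apply, AffineMap.comp_apply, LinearMap.coe_toAffineMap,
    LinearEquiv.coe_coe, b.equivFun.symm_apply_eq]
  funext c
  simpa using congrFun (hg c) i

end AffineEval

theorem shared_max_rank_stress_affine_general (n d : ℕ)
    (G : SimpleGraph (Fin n)) (p q : Config n d)
    (hp : affineSpan ℝ (Set.range p) = ⊤) (hq : affineSpan ℝ (Set.range q) = ⊤)
    (Ω : Matrix (Fin n) (Fin n) ℝ) (hrank : Ω.rank = n - d - 1)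
    (hΩp : IsEquilibriumStressMatrix G p Ω) (hΩq : IsEquilibriumStressMatrix G q Ω) :
    ∃ (M : EuclideanSpace ℝ (Fin d) ≃ₗ[ℝ] EuclideanSpace ℝ (Fin d))
      (t : EuclideanSpace ℝ (Fin d)), ∀ i, q i = M (p i) + t := by
  have hker := range_affineEval_eq_ker_mulVecLin hp hΩp.1.2.2 hΩp.2 (by simpa using hrank)
  obtain ⟨f, hf⟩ := exists_affineMap_comp_eq_of_range_affineEval_le
    ((range_affineEval_le_ker_mulVecLin hΩq.1.2.2 hΩq.2).trans hker.ge)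
  have hsurj : Function.Surjective f.linear :=
    f.linear_surjective_of_affineSpan_image_eq_top (s := Set.range p)
      (by rwa [← Set.range_comp, hf])
  refine ⟨.ofBijective f.linear ⟨LinearMap.injective_iff_surjective.2 hsurj, hsurj⟩, f 0,
    fun i => ?_⟩
  rw [← hf]
  exact congrFun f.decomp (p i)

/-- Two spanning frameworks sharing an equilibrium stress matrix of maximal rank
`n - d - 1` are related by an invertible affine transformation. -/
theorem shared_max_rank_stress_affine (n d : ℕ) (hnd : n ≥ d + 2)
    (G : SimpleGraph (Fin n)) (p q : Config n d)
    (hp : affineSpan ℝ (Set.range p) = ⊤) (hq : affineSpan ℝ (Set.range q) = ⊤)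
    (Ω : Matrix (Fin n) (Fin n) ℝ) (hrank : Ω.rank = n - d - 1)
    (hΩp : IsEquilibriumStressMatrix G p Ω) (hΩq : IsEquilibriumStressMatrix G q Ω) :
    ∃ (M : EuclideanSpace ℝ (Fin d) ≃ₗ[ℝ] EuclideanSpace ℝ (Fin d))
      (t : EuclideanSpace ℝ (Fin d)), ∀ i, q i = M (p i) + t :=
  shared_max_rank_stress_affine_general n d G p q hp hq Ω hrank hΩp hΩq
end

section
/- Let n ≥ d + 2, let G be a graph on Fin n, and let Ω be a stress matrix for G (symmetric, zero at non-edge off-diagonal entries, all-ones vector in the kernel) with rank Ω ≤ n − d − 1. Then there exists a configuration p : Fin n → ℝ^d whose points affinely span ℝ^d such that Ω is an equilibrium stress matrix for (G,p). -/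
open scoped InnerProductSpace

/-!
The kernel of `Ω` contains the all-ones vector `𝟙` and has dimension at least `d + 1`, so `𝟙`
extends to linearly independent kernel vectors `𝟙, v₁, …, v_d`. Taking `v₁, …, v_d` as the
coordinate functions of the configuration makes `Ω` an equilibrium stress coordinatewise. If the
points lay in a proper affine subspace, some nonzero functional `f` would be constant on them, and
`f (p j) = ∑ₖ f (eₖ) vₖ j` would give a nontrivial linear relation between `𝟙` and the `vₖ`.
-/
section

variable {K V : Type*} [DivisionRing K] [AddCommGroup V] [Module K V]

theorem exists_linearIndependent_cons_of_lt_finrank_of_ne_zero {x : V} (hx : x ≠ 0) {k : ℕ}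
    (hk : k < Module.finrank K V) : ∃ w : Fin k → V, LinearIndependent K (Fin.cons x w) := by
  induction k with
  | zero => exact ⟨Fin.elim0, .of_subsingleton (ι := Fin 1) 0 hx⟩
  | succ k ih =>
    obtain ⟨w, hw⟩ := ih (by omega)
    obtain ⟨y, hy⟩ := exists_linearIndependent_snoc_of_lt_finrank hw hk
    exact ⟨Fin.snoc w y, by rwa [Fin.cons_snoc_eq_snoc_cons]⟩

theorem Submodule.exists_linearIndependent_cons_of_mem {W : Submodule K V} {x : V} (hxW : x ∈ W)
    (hx : x ≠ 0) {k : ℕ} (hk : k < Module.finrank K W) :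
    ∃ w : Fin k → V, (∀ i, w i ∈ W) ∧ LinearIndependent K (Fin.cons x w) := by
  obtain ⟨w, hw⟩ := exists_linearIndependent_cons_of_lt_finrank_of_ne_zero
    (x := (⟨x, hxW⟩ : W)) (by simpa using hx) hk
  refine ⟨fun i => w i, fun i => (w i).2, ?_⟩
  have := hw.map' W.subtype W.ker_subtype
  rwa [Fin.comp_cons] at this

end

theorem affineSpan_range_eq_top_of_linearIndependent_cons {K ι V : Type*} [Field K]
    [AddCommGroup V] [Module K V] {d : ℕ} (b : Module.Basis (Fin d) K V) (p : ι → V)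
    (h : LinearIndependent K (Fin.cons (1 : ι → K) fun k j => b.repr (p j) k)) :
    affineSpan K (Set.range p) = ⊤ := by
  obtain ⟨j₀⟩ : Nonempty ι := by
    by_contra hι
    rw [not_nonempty_iff] at hι
    exact h.ne_zero 0 (Subsingleton.elim _ _)
  rw [AffineSubspace.affineSpan_eq_top_iff_vectorSpan_eq_top_of_nonempty K _ _
    (Set.range_nonempty_iff_nonempty.mpr ⟨j₀⟩)]
  by_contra hspan
  obtain ⟨f, hf, hker⟩ := (vectorSpan K (Set.range p)).exists_le_ker_of_lt_top
    (lt_top_iff_ne_top.mpr hspan)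
  have hconst : ∀ j, f (p j) = f (p j₀) := fun j => by
    have := hker (vsub_mem_vectorSpan K (Set.mem_range_self j) (Set.mem_range_self j₀))
    simpa [sub_eq_zero] using this
  have hcoord : ∀ j, ∑ k, f (b k) * b.repr (p j) k = f (p j) := fun j => by
    conv_rhs => rw [← b.sum_repr (p j)]
    simp only [map_sum, map_smul, smul_eq_mul, mul_comm]
  have hrel := Fintype.linearIndependent_iff.mp h (Fin.cons (-f (p j₀)) fun k => f (b k)) (by
    funext j
    simp [Fin.sum_univ_succ, Finset.sum_apply, hcoord, hconst])
  exact hf (b.ext fun k => by simpa using hrel k.succ)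

theorem sum_smul_toLp_apply {R ι κ : Type*} [Ring R] [Fintype ι] (p : ENNReal)
    (Ω : Matrix ι ι R) (x : κ → ι → R) (i : ι) (k : κ) :
    (∑ j, Ω i j • WithLp.toLp p (fun k => x k j)) k = Ω.mulVec (x k) i := by
  simp [Matrix.mulVec, dotProduct]

/-- Every stress matrix for `G` of rank at most `n - d - 1` is the equilibrium stress
matrix of some framework whose points affinely span `ℝ^d`. -/
theorem stress_has_spanning_kernel_framework (n d : ℕ) (hnd : n ≥ d + 2)
    (G : SimpleGraph (Fin n)) (Ω : Matrix (Fin n) (Fin n) ℝ)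
    (hΩ : IsStressMatrix G Ω) (hrank : Ω.rank ≤ n - d - 1) :
    ∃ p : Config n d, affineSpan ℝ (Set.range p) = ⊤ ∧
      IsEquilibriumStressMatrix G p Ω := by
  have h1 : (1 : Fin n → ℝ) ∈ LinearMap.ker Ω.mulVecLin := hΩ.2.2
  have h1ne : (1 : Fin n → ℝ) ≠ 0 := fun h => one_ne_zero (congrFun h ⟨0, by omega⟩)
  have hdim : d < Module.finrank ℝ (LinearMap.ker Ω.mulVecLin) := by
    have := LinearMap.finrank_range_add_finrank_ker Ω.mulVecLin
    rw [Module.finrank_fin_fun] at this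
    unfold Matrix.rank at hrank
    omega
  obtain ⟨v, hvΩ, hv⟩ := Submodule.exists_linearIndependent_cons_of_mem h1 h1ne hdim
  refine ⟨fun j => WithLp.toLp 2 fun k => v k j, ?_, hΩ, fun i => ?_⟩
  · exact affineSpan_range_eq_top_of_linearIndependent_cons
      (EuclideanSpace.basisFun _ ℝ).toBasis _ hv
  · ext k
    rw [sum_smul_toLp_apply]
    exact congrFun (hvΩ k) i
end

section
/- Let n ≥ d + 2, let G be a graph on Fin n, and let v : Fin n → ℝ^(n−d−1) be a centered general position orthogonal representation of G: ⟨v i, v j⟩ = 0 whenever i ≠ j and {i,j} is not an edge of G; every subset of the v i of size at most n − d − 1 is linearly independent; and Σ_i v i = 0. Then the Gram matrix Ω given by Ω i j = ⟨v i, v j⟩ is a positive semidefinite stress matrix for G of rank exactly n − d − 1 (in particular, Ω is symmetric, Ω i j = 0 at non-edge off-diagonal entries, and the all-ones vector lies in its kernel). -/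
open scoped InnerProductSpace

open scoped ComplexOrder

open Module Submodule Set Matrix

section Gram

variable {𝕜 ι E : Type*} [RCLike 𝕜] [Fintype ι] [NormedAddCommGroup E] [InnerProductSpace 𝕜 E]

theorem Matrix.rank_gram [FiniteDimensional 𝕜 E] (v : ι → E) :
    (gram 𝕜 v).rank = finrank 𝕜 (span 𝕜 (range v)) := by
  let b := stdOrthonormalBasis 𝕜 E
  let e := b.repr.toLinearEquiv.trans (WithLp.linearEquiv 2 𝕜 _)
  have hcols : range (of fun i j ↦ b.repr (v j) i).col = e '' range v := by
    rw [← range_comp]; rfl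
  rw [gram_eq_conjTranspose_mul b, rank_conjTranspose_mul_self, rank_eq_finrank_span_cols,
    hcols, span_image_linearEquiv, LinearEquiv.finrank_map_eq]

theorem Matrix.gram_mulVec_one_of_sum_eq_zero {v : ι → E} (hv : ∑ i, v i = 0) :
    gram 𝕜 v *ᵥ (fun _ ↦ 1) = 0 := by
  funext i
  simp [mulVec, dotProduct, gram_apply, ← inner_sum, hv]

end Gram

theorem finrank_span_range_eq_of_linearIndependent {K V ι : Type*} [DivisionRing K]
    [AddCommGroup V] [Module K V] [FiniteDimensional K V] {v : ι → V} {S : Finset ι}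
    (hS : LinearIndependent K (fun i : S ↦ v i)) (hcard : S.card = finrank K V) :
    finrank K (span K (range v)) = finrank K V := by
  have htop := hS.span_eq_top_of_card_eq_finrank' (by simpa using hcard)
  rw [eq_top_iff.2 (htop.symm.le.trans (span_mono ?_)), finrank_top]
  rintro _ ⟨i, rfl⟩
  exact ⟨i, rfl⟩

theorem isStressMatrix_gram {n : ℕ} {E : Type*} [NormedAddCommGroup E] [InnerProductSpace ℝ E]
    (G : SimpleGraph (Fin n)) {v : Fin n → E}
    (horth : ∀ i j, i ≠ j → ¬ G.Adj i j → ⟪v i, v j⟫_ℝ = 0) (hcent : ∑ i, v i = 0) :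
    IsStressMatrix G (gram ℝ v) :=
  ⟨isHermitian_iff_isSymm.1 (isHermitian_gram ℝ v), horth, gram_mulVec_one_of_sum_eq_zero hcent⟩

theorem gram_of_centered_gor_is_stress_general (n d : ℕ)
    (G : SimpleGraph (Fin n)) (v : Fin n → EuclideanSpace ℝ (Fin (n - d - 1)))
    (horth : ∀ i j, i ≠ j → ¬ G.Adj i j → ⟪v i, v j⟫_ℝ = 0)
    (hgen : ∀ S : Finset (Fin n), S.card ≤ n - d - 1 →
      LinearIndependent ℝ (fun i : S => v i.1))
    (hcent : ∑ i, v i = 0) :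
    IsStressMatrix G (Matrix.of fun i j => ⟪v i, v j⟫_ℝ) ∧
    (Matrix.of fun i j => ⟪v i, v j⟫_ℝ).PosSemidef ∧
    (Matrix.of fun i j => ⟪v i, v j⟫_ℝ).rank = n - d - 1 := by
  change IsStressMatrix G (gram ℝ v) ∧ (gram ℝ v).PosSemidef ∧ (gram ℝ v).rank = n - d - 1
  obtain ⟨S, -, hS⟩ := (Finset.univ : Finset (Fin n)).exists_subset_card_eq
    (n := n - d - 1) (by simp only [Finset.card_univ, Fintype.card_fin]; omega)
  refine ⟨isStressMatrix_gram G horth hcent, posSemidef_gram ℝ v, ?_⟩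
  rw [rank_gram, finrank_span_range_eq_of_linearIndependent (hgen S hS.le),
    finrank_euclideanSpace_fin]
  rw [hS, finrank_euclideanSpace_fin]

/-- The Gram matrix of a centered general position orthogonal representation of `G` in
`ℝ^(n-d-1)` is a PSD stress matrix for `G` of rank exactly `n - d - 1`. -/
theorem gram_of_centered_gor_is_stress (n d : ℕ) (hnd : n ≥ d + 2)
    (G : SimpleGraph (Fin n)) (v : Fin n → EuclideanSpace ℝ (Fin (n - d - 1)))
    (horth : ∀ i j, i ≠ j → ¬ G.Adj i j → ⟪v i, v j⟫_ℝ = 0)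
    (hgen : ∀ S : Finset (Fin n), S.card ≤ n - d - 1 →
      LinearIndependent ℝ (fun i : S => v i.1))
    (hcent : ∑ i, v i = 0) :
    IsStressMatrix G (Matrix.of fun i j => ⟪v i, v j⟫_ℝ) ∧
    (Matrix.of fun i j => ⟪v i, v j⟫_ℝ).PosSemidef ∧
    (Matrix.of fun i j => ⟪v i, v j⟫_ℝ).rank = n - d - 1 :=
  gram_of_centered_gor_is_stress_general n d G v horth hgen hcent
end

section
/- Let n ≥ d + 2 and let v : Fin n → ℝ^(n−d−1) be a family of vectors in general linear position (every subset of size at most n − d − 1 is linearly independent). Let K = {α : Fin n → ℝ | Σ_i α i • v i = 0}. Then K is a linear subspace of dimension d + 1; moreover, if K contains a vector all of whose coordinates are nonzero, then the set of such full-rank vectors is an open dense subset of K. -/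
open scoped InnerProductSpace

/-!
The centering maps form the kernel of `α ↦ ∑ i, α i • v i`. General position makes any
`n - d - 1` of the vectors a basis of `ℝ^(n-d-1)`, so this map is onto and rank–nullity gives
the dimension `d + 1`. Inside the kernel, the centering maps with a vanishing coordinate lie in
finitely many hyperplanes, each proper because of the given full-rank centering map; the
complement of such a hyperplane is open and dense, and Baire's theorem intersects them.
-/

open Module

section Dimension

variable {K V ι : Type*} [Field K] [AddCommGroup V] [Module K V]

theorem span_range_eq_top_of_linearIndependent_restrict [FiniteDimensional K V] {v : ι → V} (S : Finset ι)
    (hS : LinearIndependent K (fun i : S => v i)) (hcard : S.card = finrank K V) :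
    Submodule.span K (Set.range v) = ⊤ :=
  eq_top_iff.2 <| (hS.span_eq_top_of_card_eq_finrank' (by simpa using hcard)).ge.trans
    (Submodule.span_mono (Set.range_comp_subset_range _ _))

theorem finrank_ker_fintypeLinearCombination [Fintype ι] {v : ι → V}
    (hv : Submodule.span K (Set.range v) = ⊤) :
    finrank K (LinearMap.ker (Fintype.linearCombination K v)) =
      Fintype.card ι - finrank K V := by
  have := (Fintype.linearCombination K v).finrank_range_add_finrank_ker
  rw [Fintype.range_linearCombination, hv, finrank_top, finrank_fintype_fun_eq_card] at this
  omega

end Dimension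

section Density

variable {𝕜 E ι : Type*} [NontriviallyNormedField 𝕜] [AddCommGroup E] [Module 𝕜 E]
  [TopologicalSpace E]

theorem isOpen_setOf_forall_apply_ne_zero [Finite ι] (f : ι → E →L[𝕜] 𝕜) :
    IsOpen {x | ∀ i, f i x ≠ 0} := by
  simpa only [Set.ofPred_forall] using
    isOpen_iInter_of_finite fun i => isOpen_ne_fun (f i).continuous continuous_const

variable [IsTopologicalAddGroup E] [ContinuousSMul 𝕜 E]

theorem dense_setOf_apply_ne_zero {f : E →L[𝕜] 𝕜} (hf : f ≠ 0) : Dense {x | f x ≠ 0} := by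
  have : interior (LinearMap.ker (f : E →ₗ[𝕜] 𝕜) : Set E) = ∅ := by
    by_contra h
    refine hf (ContinuousLinearMap.coe_injective (LinearMap.ker_eq_top.1 ?_))
    exact Submodule.eq_top_of_nonempty_interior' _ (Set.nonempty_iff_ne_empty.2 h)
  exact interior_eq_empty_iff_dense_compl.1 this

theorem dense_setOf_forall_apply_ne_zero [BaireSpace E] [Countable ι] (f : ι → E →L[𝕜] 𝕜)
    (hf : ∀ i, f i ≠ 0) : Dense {x | ∀ i, f i x ≠ 0} := by
  simpa only [Set.ofPred_forall] using
    dense_iInter_of_isOpen (fun i => isOpen_ne_fun (f i).continuous continuous_const)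
      fun i => dense_setOf_apply_ne_zero (hf i)

end Density

/-- For vectors in general position in `ℝ^(n-d-1)`, the space of centering coefficient
vectors has dimension `d + 1`, and if it contains a vector with all coordinates nonzero,
the full-rank centering vectors form an open dense subset. -/
theorem centering_maps_dimension (n d : ℕ) (hnd : n ≥ d + 2)
    (v : Fin n → EuclideanSpace ℝ (Fin (n - d - 1)))
    (hgen : ∀ S : Finset (Fin n), S.card ≤ n - d - 1 →
      LinearIndependent ℝ (fun i : S => v i.1)) :
    ∃ K : Submodule ℝ (Fin n → ℝ),
      (∀ α : Fin n → ℝ, α ∈ K ↔ ∑ i, α i • v i = 0) ∧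
      Module.finrank ℝ K = d + 1 ∧
      ((∃ α : Fin n → ℝ, α ∈ K ∧ ∀ i, α i ≠ 0) →
        IsOpen {α : K | ∀ i, (α : Fin n → ℝ) i ≠ 0} ∧
        Dense {α : K | ∀ i, (α : Fin n → ℝ) i ≠ 0}) := by
  have hspan : Submodule.span ℝ (Set.range v) = ⊤ := by
    obtain ⟨S, -, hS⟩ := (Finset.univ : Finset (Fin n)).exists_subset_card_eq
      (n := n - d - 1) (by simp only [Finset.card_univ, Fintype.card_fin]; omega)
    exact span_range_eq_top_of_linearIndependent_restrict S (hgen S hS.le) (by simp [hS])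
  refine ⟨LinearMap.ker (Fintype.linearCombination ℝ v), fun α => by
    rw [LinearMap.mem_ker, Fintype.linearCombination_apply], ?_, ?_⟩
  · rw [finrank_ker_fintypeLinearCombination hspan]
    simp only [Fintype.card_fin, finrank_euclideanSpace_fin]
    omega
  · rintro ⟨α, hαK, hα⟩
    let coord : Fin n → LinearMap.ker (Fintype.linearCombination ℝ v) →L[ℝ] ℝ :=
      fun i => (ContinuousLinearMap.proj i).comp (Submodule.subtypeL _)
    exact ⟨isOpen_setOf_forall_apply_ne_zero coord,
      dense_setOf_forall_apply_ne_zero coord fun i h => hα i (DFunLike.congr_fun h ⟨α, hαK⟩)⟩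
end
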